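/- arXiv:2402.03861 — 2 statements merged into one kernel-verified Lean document; each statement's English description precedes it below -/
import Mathlib

section
/- There exists an absolute constant C > 0 such that for every integer N ≥ 1, every infinitely differentiable function u : ℝ → ℝ, and every G > 0 with |u^{(i)}(t)| ≤ G for all integers i ≥ 0 and all t ∈ [0,1], if u_N = (1/N!)·∫_0^1 u^{(N)}(s) ds, then for all t ∈ [0,1], |u_N · (B_{N+1}(t) − B_{N+1}(0))/(N+1)| ≤ C·G·(2π)^{−N}. -/
open Real Complex

/-- The `n`-th Bernoulli polynomial evaluated at `t : ℝ`. -/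
noncomputable def B (n : ℕ) (t : ℝ) : ℝ :=
  Polynomial.aeval t (Polynomial.bernoulli n)

lemma B_eq_bernoulliFun (n : ℕ) (t : ℝ) : B n t = bernoulliFun n t := by
  rw [B, bernoulliFun, Polynomial.aeval_def, Polynomial.eval_map]

lemma bernoulliFun_bound {k : ℕ} (hk : 2 ≤ k) {x : ℝ} (hx : x ∈ Set.Icc (0:ℝ) 1) :
    |bernoulliFun k x| ≤ 4 * k.factorial / (2 * Real.pi) ^ k := by
  have h := hasSum_one_div_nat_pow_mul_fourier hk hx
  set f : ℕ → ℂ := fun n =>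
    (1 : ℂ) / (n : ℂ) ^ k * (fourier n (x : UnitAddCircle) +
      (-1 : ℂ) ^ k * fourier (-n) (x : UnitAddCircle)) with hf
  have hg : HasSum (fun n : ℕ => 2 * ((1:ℝ) / (n:ℝ) ^ 2)) (Real.pi ^ 2 / 3) := by
    have := hasSum_zeta_two.mul_left 2
    convert this using 1
    · rfl
    · ring
  have hle : ∀ n : ℕ, ‖f n‖ ≤ 2 * ((1:ℝ) / (n:ℝ) ^ 2) := by
    intro n
    rcases Nat.eq_zero_or_pos n with rfl | hn
    · simp [hf, zero_pow (by omega : k ≠ 0)]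
    · have h1 : ‖(fourier (n:ℤ) (x : UnitAddCircle) : ℂ)‖ = 1 := Circle.norm_coe _
      have h2 : ‖(fourier (-(n:ℤ)) (x : UnitAddCircle) : ℂ)‖ = 1 := Circle.norm_coe _
      have hb : ‖fourier (n:ℤ) (x : UnitAddCircle) +
          (-1 : ℂ) ^ k * fourier (-(n:ℤ)) (x : UnitAddCircle)‖ ≤ 2 := by
        calc ‖fourier (n:ℤ) (x : UnitAddCircle) +
              (-1 : ℂ) ^ k * fourier (-(n:ℤ)) (x : UnitAddCircle)‖
            ≤ ‖(fourier (n:ℤ) (x : UnitAddCircle) : ℂ)‖ +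
              ‖(-1 : ℂ) ^ k * fourier (-(n:ℤ)) (x : UnitAddCircle)‖ := norm_add_le _ _
          _ ≤ 2 := by rw [norm_mul, norm_pow, norm_neg, norm_one, one_pow, one_mul, h1, h2]; norm_num
      have h3 : ‖(1 : ℂ) / (n : ℂ) ^ k‖ = 1 / (n:ℝ) ^ k := by
        rw [norm_div, norm_one, norm_pow, Complex.norm_natCast]
      calc ‖f n‖ = ‖(1 : ℂ) / (n : ℂ) ^ k‖ * ‖fourier (n:ℤ) (x : UnitAddCircle) +
              (-1 : ℂ) ^ k * fourier (-(n:ℤ)) (x : UnitAddCircle)‖ := by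
            rw [hf]; push_cast; rw [norm_mul]
        _ ≤ (1 / (n:ℝ) ^ k) * 2 := by
            rw [h3]
            exact mul_le_mul_of_nonneg_left hb (by positivity)
        _ ≤ (1 / (n:ℝ) ^ 2) * 2 := by
            have hn1 : (1:ℝ) ≤ (n:ℝ) := by exact_mod_cast hn
            have : (n:ℝ) ^ 2 ≤ (n:ℝ) ^ k := pow_le_pow_right₀ hn1 hk
            have := one_div_le_one_div_of_le (by positivity : (0:ℝ) < (n:ℝ)^2) this
            nlinarith
        _ = 2 * ((1:ℝ) / (n:ℝ) ^ 2) := by ring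
  have hsn : Summable (fun n => ‖f n‖) :=
    Summable.of_nonneg_of_le (fun n => norm_nonneg _) hle hg.summable
  have key : ‖-(2 * (Real.pi:ℂ) * Complex.I) ^ k / k.factorial * bernoulliFun k x‖ ≤ 4 := by
    calc ‖-(2 * (Real.pi:ℂ) * Complex.I) ^ k / k.factorial * bernoulliFun k x‖
        = ‖∑' n, f n‖ := by rw [h.tsum_eq]
      _ ≤ ∑' n, ‖f n‖ := norm_tsum_le_tsum_norm hsn
      _ ≤ ∑' n : ℕ, 2 * ((1:ℝ) / (n:ℝ) ^ 2) := Summable.tsum_le_tsum hle hsn hg.summable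
      _ = Real.pi ^ 2 / 3 := hg.tsum_eq
      _ ≤ 4 := by nlinarith [Real.pi_lt_d2, Real.pi_pos]
  have hnorm : ‖-(2 * (Real.pi:ℂ) * Complex.I) ^ k / k.factorial * bernoulliFun k x‖
      = (2 * Real.pi) ^ k / k.factorial * |bernoulliFun k x| := by
    simp [norm_mul, norm_div, norm_pow, Complex.norm_real, Complex.norm_natCast,
      Complex.norm_I, Real.norm_eq_abs, abs_of_pos Real.pi_pos]
  rw [hnorm] at key
  have hpos : (0:ℝ) < (2 * Real.pi) ^ k / k.factorial := by
    have := Real.pi_pos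
    positivity
  calc |bernoulliFun k x| = ((2 * Real.pi) ^ k / k.factorial * |bernoulliFun k x|)
        * (k.factorial / (2 * Real.pi) ^ k) := by
        field_simp
    _ ≤ 4 * (k.factorial / (2 * Real.pi) ^ k) := by
        apply mul_le_mul_of_nonneg_right key
        positivity
    _ = 4 * k.factorial / (2 * Real.pi) ^ k := by ring

theorem bernoulli_coeff_times_bernoulli_poly_bound :
    ∃ C : ℝ, 0 < C ∧
      ∀ N : ℕ, 1 ≤ N →
        ∀ u : ℝ → ℝ, ContDiff ℝ (⊤ : ℕ∞) u →
          ∀ G : ℝ, 0 < G →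
            (∀ i : ℕ, ∀ t ∈ Set.Icc (0:ℝ) 1, |iteratedDeriv i u t| ≤ G) →
            ∀ t ∈ Set.Icc (0:ℝ) 1,
              |((1 / (N.factorial : ℝ)) * ∫ s in (0:ℝ)..1, iteratedDeriv N u s) *
                  ((B (N + 1) t - B (N + 1) 0) / (N + 1))|
                ≤ C * G * (2 * Real.pi) ^ (-(N : ℤ)) := by
  refine ⟨8, by norm_num, fun N hN u hu G hG hbound t ht => ?_⟩
  have hpi : (0:ℝ) < 2 * Real.pi := by positivity
  have hk : 2 ≤ N + 1 := by omega
  have h0 : (0:ℝ) ∈ Set.Icc (0:ℝ) 1 := by norm_num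
  -- bound on the integral term
  have hint : |∫ s in (0:ℝ)..1, iteratedDeriv N u s| ≤ G := by
    have := intervalIntegral.norm_integral_le_of_norm_le_const
      (C := G) (f := iteratedDeriv N u) (a := (0:ℝ)) (b := 1) ?_
    · simpa using this
    · intro x hx
      rw [Set.uIoc_of_le (by norm_num : (0:ℝ) ≤ 1)] at hx
      exact hbound N x ⟨le_of_lt hx.1, hx.2⟩
  have hNf : (0:ℝ) < (N.factorial : ℝ) := by exact_mod_cast N.factorial_pos
  have hc1 : |(1 / (N.factorial : ℝ)) * ∫ s in (0:ℝ)..1, iteratedDeriv N u s|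
      ≤ G / N.factorial := by
    rw [abs_mul, abs_of_pos (by positivity : (0:ℝ) < 1 / (N.factorial : ℝ))]
    calc 1 / (N.factorial : ℝ) * |∫ s in (0:ℝ)..1, iteratedDeriv N u s|
        ≤ 1 / (N.factorial : ℝ) * G := by
          exact mul_le_mul_of_nonneg_left hint (by positivity)
      _ = G / N.factorial := by ring
  -- bound on the Bernoulli term
  have hB1 := bernoulliFun_bound hk ht
  have hB2 := bernoulliFun_bound hk h0
  have hBdiff : |B (N + 1) t - B (N + 1) 0| ≤ 8 * (N+1).factorial / (2 * Real.pi) ^ (N+1) := by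
    rw [B_eq_bernoulliFun, B_eq_bernoulliFun]
    calc |bernoulliFun (N+1) t - bernoulliFun (N+1) 0|
        ≤ |bernoulliFun (N+1) t| + |bernoulliFun (N+1) 0| := abs_sub _ _
      _ ≤ 4 * (N+1).factorial / (2 * Real.pi) ^ (N+1)
          + 4 * (N+1).factorial / (2 * Real.pi) ^ (N+1) := add_le_add hB1 hB2
      _ = 8 * (N+1).factorial / (2 * Real.pi) ^ (N+1) := by ring
  have hfac : ((N+1).factorial : ℝ) = (N+1) * N.factorial := by
    rw [Nat.factorial_succ]; push_cast; ring
  have hN1 : (0:ℝ) < (N:ℝ) + 1 := by positivity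
  have hc2 : |(B (N + 1) t - B (N + 1) 0) / (N + 1)|
      ≤ 8 * N.factorial / (2 * Real.pi) ^ (N+1) := by
    rw [abs_div, abs_of_pos (by push_cast; linarith : (0:ℝ) < ((N:ℝ) + 1)), div_le_iff₀ hN1]
    calc |B (N + 1) t - B (N + 1) 0| ≤ 8 * (N+1).factorial / (2 * Real.pi) ^ (N+1) := hBdiff
      _ = 8 * N.factorial / (2 * Real.pi) ^ (N+1) * ((N:ℝ)+1) := by
          rw [hfac]; ring
  -- combine
  have hzpow : (2 * Real.pi) ^ (-(N : ℤ)) = 1 / (2 * Real.pi) ^ N := by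
    rw [zpow_neg, zpow_natCast, one_div]
  rw [abs_mul, hzpow]
  calc |(1 / (N.factorial : ℝ)) * ∫ s in (0:ℝ)..1, iteratedDeriv N u s|
        * |(B (N + 1) t - B (N + 1) 0) / (N + 1)|
      ≤ (G / N.factorial) * (8 * N.factorial / (2 * Real.pi) ^ (N+1)) := by
        apply mul_le_mul hc1 hc2 (abs_nonneg _) (by positivity)
    _ = 8 * G / (2 * Real.pi) ^ (N+1) := by field_simp
    _ ≤ 8 * G * (1 / (2 * Real.pi) ^ N) := by
        rw [pow_succ, mul_one_div]
        apply div_le_div_of_nonneg_left (by positivity) (by positivity)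
        nlinarith [Real.pi_gt_three, pow_pos hpi N]
end

section
/- Let N ≥ 1 and k ≥ 1 be integers, let Q be a real k×k matrix, and let H = I_{N+1} ⊗ I_k + P ⊗ Q. For i = 1,…,N let S_i be the ((N+1)k)×((N+1)k) block matrix, with (N+1)×(N+1) blocks of size k×k indexed 0,…,N, equal to the identity matrix except that its block in position (i, i−1) equals −Q/i. Then H · S_N · S_{N−1} ⋯ S_1 = T, where T is the block matrix whose block row 0 equals (T₁, T₂, …, T_N, 0) with T₁ = Σ_{j=0}^{N} (−1)^j (B_j(0)/j!) Q^j and, for 2 ≤ j ≤ N, T_j = Σ_{m=j}^{N} (−1)^{m−j+1} · B_m(0) · ((j−1)!/m!) · Q^{m−j+1}, whose diagonal blocks (j,j) equal I_k for 1 ≤ j ≤ N, and whose remaining blocks are zero. -/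
open scoped BigOperators Kronecker

/-- The `(N+1) × (N+1)` matrix `P` whose only nonzero entries are
`P 0 j = -B (j+1) 0 / (j+1)` for `0 ≤ j ≤ N-1` and `P (j+1) j = 1/(j+1)` for `0 ≤ j ≤ N-1`. -/
noncomputable def Pmat (N : ℕ) : Matrix (Fin (N + 1)) (Fin (N + 1)) ℝ :=
  Matrix.of fun i j =>
    if (i : ℕ) = 0 then
      (if (j : ℕ) < N then -(B ((j : ℕ) + 1) 0) / ((j : ℕ) + 1) else 0)
    else if (i : ℕ) = (j : ℕ) + 1 then 1 / ((j : ℕ) + 1) else 0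

/-- Assemble a block matrix from an `n × n` array of `k × k` blocks. -/
def blockOf {n k : ℕ} (f : Fin n → Fin n → Matrix (Fin k) (Fin k) ℝ) :
    Matrix (Fin n × Fin k) (Fin n × Fin k) ℝ :=
  Matrix.of fun p q => f p.1 q.1 p.2 q.2

/-- The matrix `S_i`: the identity, except the block in position `(i, i-1)` equals `-Q/i`. -/
noncomputable def Smat (N k : ℕ) (Q : Matrix (Fin k) (Fin k) ℝ) (i : ℕ) :
    Matrix (Fin (N + 1) × Fin k) (Fin (N + 1) × Fin k) ℝ :=
  blockOf fun p q =>
    if p = q then 1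
    else if (p : ℕ) = i ∧ (q : ℕ) + 1 = i then (-(i : ℝ)⁻¹) • Q
    else 0

/-- `Sprod N k Q m = S_N * S_{N-1} * ⋯ * S_{N-m+1}`; in particular
`Sprod N k Q N = S_N * S_{N-1} * ⋯ * S_1`. -/
noncomputable def Sprod (N k : ℕ) (Q : Matrix (Fin k) (Fin k) ℝ) :
    ℕ → Matrix (Fin (N + 1) × Fin k) (Fin (N + 1) × Fin k) ℝ
  | 0 => 1
  | m + 1 => Sprod N k Q m * Smat N k Q (N - m)

/-- `T₁ = ∑_{j=0}^N (-1)^j (B_j(0)/j!) Q^j`. -/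
noncomputable def T1mat (N k : ℕ) (Q : Matrix (Fin k) (Fin k) ℝ) :
    Matrix (Fin k) (Fin k) ℝ :=
  ∑ j ∈ Finset.range (N + 1), ((-1 : ℝ) ^ j * B j 0 / (j.factorial : ℝ)) • Q ^ j

/-- `T_j = ∑_{m=j}^N (-1)^{m-j+1} B_m(0) ((j-1)!/m!) Q^{m-j+1}` for `2 ≤ j ≤ N`. -/
noncomputable def Tjmat (N k : ℕ) (Q : Matrix (Fin k) (Fin k) ℝ) (j : ℕ) :
    Matrix (Fin k) (Fin k) ℝ :=
  ∑ m ∈ Finset.Icc j N,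
    ((-1 : ℝ) ^ (m - j + 1) * B m 0 * (((j - 1).factorial : ℝ) / (m.factorial : ℝ))) •
      Q ^ (m - j + 1)

/-- The block matrix `T`: block row `0` is `(T₁, T₂, …, T_N, 0)`, blocks `(j,j) = I`
for `1 ≤ j ≤ N`, and all remaining blocks vanish. -/
noncomputable def Tmat (N k : ℕ) (Q : Matrix (Fin k) (Fin k) ℝ) :
    Matrix (Fin (N + 1) × Fin k) (Fin (N + 1) × Fin k) ℝ :=
  blockOf fun i j =>
    if (i : ℕ) = 0 then
      (if (j : ℕ) = 0 then T1mat N k Q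
       else if (j : ℕ) < N then Tjmat N k Q ((j : ℕ) + 1)
       else 0)
    else if (i : ℕ) = (j : ℕ) then 1 else 0

lemma blockOf_mul {n k : ℕ} (f g : Fin n → Fin n → Matrix (Fin k) (Fin k) ℝ) :
    blockOf f * blockOf g = blockOf fun i j => ∑ r, f i r * g r j := by
  ext ⟨i, a⟩ ⟨j, b⟩
  simp [blockOf, Matrix.mul_apply, Matrix.sum_apply, Fintype.sum_prod_type]

lemma one_eq_blockOf {n k : ℕ} :
    (1 : Matrix (Fin n × Fin k) (Fin n × Fin k) ℝ) =
      blockOf fun i j => if i = j then 1 else 0 := by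
  ext ⟨i, a⟩ ⟨j, b⟩
  by_cases h : i = j <;> by_cases h2 : a = b <;>
    simp [blockOf, Matrix.one_apply, Prod.ext_iff, h, h2]

lemma kron_eq_blockOf {n k : ℕ} (A : Matrix (Fin n) (Fin n) ℝ)
    (Q : Matrix (Fin k) (Fin k) ℝ) :
    A ⊗ₖ Q = blockOf fun i j => A i j • Q := by
  ext ⟨i, a⟩ ⟨j, b⟩
  simp [blockOf, Matrix.kroneckerMap_apply]

lemma blockOf_ext {n k : ℕ} {f g : Fin n → Fin n → Matrix (Fin k) (Fin k) ℝ}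
    (h : ∀ i j, f i j = g i j) : blockOf f = blockOf g := by
  ext ⟨i, a⟩ ⟨j, b⟩; rw [blockOf, blockOf]; exact congrFun (congrFun (h i j) a) b

noncomputable def spN {k : ℕ} (N : ℕ) (Q : Matrix (Fin k) (Fin k) ℝ) (m i j : ℕ) :
    Matrix (Fin k) (Fin k) ℝ :=
  if i = j then 1
  else if j < i ∧ N - m ≤ j then
    ((-1 : ℝ) ^ (i - j) * (j.factorial : ℝ) / (i.factorial : ℝ)) • Q ^ (i - j)
  else 0

lemma smat_ker_split {N k : ℕ} (Q : Matrix (Fin k) (Fin k) ℝ) (c : ℕ)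
    (p q : Fin (N + 1)) :
    (if p = q then (1 : Matrix (Fin k) (Fin k) ℝ)
      else if (p : ℕ) = c ∧ (q : ℕ) + 1 = c then (-(c : ℝ)⁻¹) • Q else 0) =
    (if p = q then (1 : Matrix (Fin k) (Fin k) ℝ) else 0) +
      (if (p : ℕ) = c ∧ (q : ℕ) + 1 = c then (-(c : ℝ)⁻¹) • Q else 0) := by
  by_cases h : p = q
  · subst h
    have h2 : ¬((p : ℕ) = c ∧ (p : ℕ) + 1 = c) := by omega
    simp [h2]
  · simp [h]

lemma spN_step {k : ℕ} (N : ℕ) (Q : Matrix (Fin k) (Fin k) ℝ) (m i j : ℕ)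
    (hm : m + 1 ≤ N) :
    spN N Q m i j + (if j + 1 = N - m then
        spN N Q m i (N - m) * ((-(((N - m : ℕ) : ℝ))⁻¹) • Q) else 0)
      = spN N Q (m + 1) i j := by
  by_cases hc : j + 1 = N - m
  · rw [if_pos hc, ← hc]
    rcases Nat.lt_trichotomy i j with hij | hij | hij
    · -- i < j
      have h1 : spN N Q m i j = 0 := by rw [spN, if_neg (by omega), if_neg (by omega)]
      have h2 : spN N Q m i (j + 1) = 0 := by rw [spN, if_neg (by omega), if_neg (by omega)]
      have h3 : spN N Q (m + 1) i j = 0 := by rw [spN, if_neg (by omega), if_neg (by omega)]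
      rw [h1, h2, h3, zero_mul, zero_add]
    · -- i = j
      subst hij
      have h2 : spN N Q m i (i + 1) = 0 := by rw [spN, if_neg (by omega), if_neg (by omega)]
      rw [h2, zero_mul, add_zero, spN, if_pos rfl, spN, if_pos rfl]
    · -- j < i
      have h1 : spN N Q m i j = 0 := by rw [spN, if_neg (by omega), if_neg (by omega)]
      rw [h1, zero_add]
      rcases eq_or_lt_of_le (show j + 1 ≤ i from hij) with hij2 | hij2
      · -- i = j + 1
        subst hij2
        have h2 : spN N Q m (j + 1) (j + 1) = 1 := by rw [spN, if_pos rfl]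
        have h3 : spN N Q (m + 1) (j + 1) j =
            ((-1 : ℝ) ^ (j + 1 - j) * (j.factorial : ℝ) / ((j + 1).factorial : ℝ)) •
              Q ^ (j + 1 - j) := by
          rw [spN, if_neg (by omega), if_pos (by omega)]
        have he : j + 1 - j = 1 := by omega
        rw [h2, h3, one_mul, he, pow_one, pow_one]
        have hfac : (((j + 1).factorial : ℝ)) = (j + 1) * (j.factorial : ℝ) := by
          rw [Nat.factorial_succ]; push_cast; ring
        have hjn : ((j : ℝ) + 1) ≠ 0 := by positivity
        have hfn : ((j.factorial : ℝ)) ≠ 0 := Nat.cast_ne_zero.mpr j.factorial_ne_zero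
        congr 1
        rw [hfac]
        push_cast
        field_simp
      · -- j + 1 < i
        have h2 : spN N Q m i (j + 1) =
            ((-1 : ℝ) ^ (i - (j + 1)) * ((j + 1).factorial : ℝ) / (i.factorial : ℝ)) •
              Q ^ (i - (j + 1)) := by
          rw [spN, if_neg (by omega), if_pos (by omega)]
        have h3 : spN N Q (m + 1) i j =
            ((-1 : ℝ) ^ (i - j) * (j.factorial : ℝ) / (i.factorial : ℝ)) • Q ^ (i - j) := by
          rw [spN, if_neg (by omega), if_pos (by omega)]
        rw [h2, h3, Matrix.smul_mul, Matrix.mul_smul, smul_smul, ← pow_succ]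
        have he : i - (j + 1) + 1 = i - j := by omega
        rw [he]
        congr 1
        have he2 : i - j = (i - (j + 1)) + 1 := by omega
        rw [he2, pow_succ]
        have hfac : (((j + 1).factorial : ℝ)) = (j + 1) * (j.factorial : ℝ) := by
          rw [Nat.factorial_succ]; push_cast; ring
        have hjn : ((j : ℝ) + 1) ≠ 0 := by positivity
        have hfn : ((i.factorial : ℝ)) ≠ 0 := Nat.cast_ne_zero.mpr i.factorial_ne_zero
        rw [hfac]
        push_cast
        field_simp
  · rw [if_neg hc, add_zero]
    by_cases hij : i = j
    · rw [spN, if_pos hij, spN, if_pos hij]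
    · rw [spN, if_neg hij, spN, if_neg hij]
      by_cases hcond : j < i ∧ N - m ≤ j
      · rw [if_pos hcond, if_pos (by omega)]
      · rw [if_neg hcond, if_neg (by omega)]

lemma Sprod_eq {N k : ℕ} (Q : Matrix (Fin k) (Fin k) ℝ) (m : ℕ) (hm : m ≤ N) :
    Sprod N k Q m = blockOf fun i j => spN N Q m (i : ℕ) (j : ℕ) := by
  induction m with
  | zero =>
      rw [Sprod, one_eq_blockOf]
      apply blockOf_ext
      intro i j
      rcases eq_or_ne i j with h | h
      · simp [h, spN]
      · have hij : (i : ℕ) ≠ (j : ℕ) := fun hc => h (Fin.ext hc)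
        rw [if_neg h, spN, if_neg hij, if_neg (by omega)]
  | succ m ih =>
      have hmN : m ≤ N := by omega
      rw [Sprod, ih hmN, Smat, blockOf_mul]
      apply blockOf_ext
      intro i j
      -- compute the sum
      have hsum : ∀ r : Fin (N + 1),
          spN N Q m (i : ℕ) (r : ℕ) *
            (if r = j then (1 : Matrix (Fin k) (Fin k) ℝ)
              else if (r : ℕ) = N - m ∧ (j : ℕ) + 1 = N - m then (-((N - m : ℕ) : ℝ)⁻¹) • Q else 0)
          = (if r = j then spN N Q m (i : ℕ) (j : ℕ) else 0) +
            (if (r : ℕ) = N - m ∧ (j : ℕ) + 1 = N - m then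
              spN N Q m (i : ℕ) (r : ℕ) * ((-((N - m : ℕ) : ℝ)⁻¹) • Q) else 0) := by
        intro r
        rw [smat_ker_split, mul_add]
        congr 1
        · by_cases h : r = j <;> simp [h]
        · by_cases h : (r : ℕ) = N - m ∧ (j : ℕ) + 1 = N - m <;> simp [h]
      calc (∑ r : Fin (N + 1), spN N Q m (i : ℕ) (r : ℕ) *
            (if r = j then (1 : Matrix (Fin k) (Fin k) ℝ)
              else if (r : ℕ) = N - m ∧ (j : ℕ) + 1 = N - m then (-((N - m : ℕ) : ℝ)⁻¹) • Q else 0))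
          = ∑ r, ((if r = j then spN N Q m (i : ℕ) (j : ℕ) else 0) +
            (if (r : ℕ) = N - m ∧ (j : ℕ) + 1 = N - m then
              spN N Q m (i : ℕ) (r : ℕ) * ((-((N - m : ℕ) : ℝ)⁻¹) • Q) else 0)) := by
            exact Finset.sum_congr rfl fun r _ => hsum r
        _ = spN N Q m (i : ℕ) (j : ℕ) +
            (if (j : ℕ) + 1 = N - m then
              spN N Q m (i : ℕ) (N - m) * ((-((N - m : ℕ) : ℝ)⁻¹) • Q) else 0) := by
            rw [Finset.sum_add_distrib, Finset.sum_ite_eq' Finset.univ j, if_pos (Finset.mem_univ j)]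
            congr 1
            by_cases hc : (j : ℕ) + 1 = N - m
            · have hNm : N - m < N + 1 := by omega
              have : ∀ r : Fin (N + 1), ((r : ℕ) = N - m ∧ (j : ℕ) + 1 = N - m) ↔
                  r = ⟨N - m, hNm⟩ := by
                intro r
                constructor
                · rintro ⟨h1, _⟩; exact Fin.ext h1
                · rintro rfl; exact ⟨rfl, hc⟩
              rw [if_pos hc]
              simp only [this]
              rw [Finset.sum_ite_eq' Finset.univ (⟨N - m, hNm⟩ : Fin (N + 1)),
                if_pos (Finset.mem_univ _)]
            · rw [if_neg hc]
              refine Finset.sum_eq_zero fun r _ => ?_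
              rw [if_neg (fun h => hc h.2)]
        _ = spN N Q (m + 1) (i : ℕ) (j : ℕ) :=
            spN_step N Q m (i : ℕ) (j : ℕ) hm

lemma spN_of_le {k : ℕ} (N : ℕ) (Q : Matrix (Fin k) (Fin k) ℝ) {i j : ℕ} (h : j ≤ i) :
    spN N Q N i j =
      ((-1 : ℝ) ^ (i - j) * (j.factorial : ℝ) / (i.factorial : ℝ)) • Q ^ (i - j) := by
  rcases eq_or_lt_of_le h with h1 | h1
  · subst h1
    rw [spN, if_pos rfl, Nat.sub_self, pow_zero, pow_zero]
    rw [one_mul, div_self (Nat.cast_ne_zero.mpr j.factorial_ne_zero : (j.factorial : ℝ) ≠ 0), one_smul]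
  · rw [spN, if_neg (by omega), if_pos (by omega)]

lemma spN_of_lt {k : ℕ} (N : ℕ) (Q : Matrix (Fin k) (Fin k) ℝ) {i j : ℕ} (h : i < j) :
    spN N Q N i j = 0 := by
  rw [spN, if_neg (by omega), if_neg (by omega)]

lemma row_pos {k : ℕ} (N : ℕ) (Q : Matrix (Fin k) (Fin k) ℝ) (i j : ℕ)
    (hi : 1 ≤ i) :
    spN N Q N i j + (1 / (((i - 1 : ℕ) : ℝ) + 1)) • (Q * spN N Q N (i - 1) j)
      = if i = j then 1 else 0 := by
  have hcast : ((i - 1 : ℕ) : ℝ) + 1 = (i : ℝ) := by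
    have : (i - 1) + 1 = i := by omega
    calc ((i - 1 : ℕ) : ℝ) + 1 = (((i - 1) + 1 : ℕ) : ℝ) := by push_cast; ring
      _ = (i : ℝ) := by rw [this]
  rcases Nat.lt_trichotomy i j with hij | hij | hij
  · rw [if_neg (by omega), spN_of_lt N Q hij, spN_of_lt N Q (by omega : i - 1 < j),
      Matrix.mul_zero, smul_zero, add_zero]
  · subst hij
    rw [if_pos rfl, spN, if_pos rfl, spN_of_lt N Q (by omega : i - 1 < i),
      Matrix.mul_zero, smul_zero, add_zero]
  · -- j < i
    rw [if_neg (by omega), spN_of_le N Q (by omega : j ≤ i),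
      spN_of_le N Q (by omega : j ≤ i - 1), Matrix.mul_smul, smul_smul, hcast]
    have hpow : Q * Q ^ (i - 1 - j) = Q ^ (i - j) := by
      rw [← pow_succ']
      congr 1
      omega
    rw [hpow, ← add_smul]
    have hifac : (i.factorial : ℝ) = (i : ℝ) * ((i - 1).factorial : ℝ) := by
      have : i.factorial = i * (i - 1).factorial := by
        conv_lhs => rw [show i = (i - 1) + 1 by omega]
        rw [Nat.factorial_succ, show i - 1 + 1 = i by omega]
      rw [this]; push_cast; ring
    have hsign : (-1 : ℝ) ^ (i - j) = -(-1 : ℝ) ^ (i - 1 - j) := by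
      rw [show i - j = (i - 1 - j) + 1 by omega, pow_succ]; ring
    have hi0 : (i : ℝ) ≠ 0 := Nat.cast_ne_zero.mpr (by omega)
    have hf0 : ((i - 1).factorial : ℝ) ≠ 0 := Nat.cast_ne_zero.mpr (i - 1).factorial_ne_zero
    have : (-1 : ℝ) ^ (i - j) * (j.factorial : ℝ) / (i.factorial : ℝ) +
        1 / (i : ℝ) * ((-1 : ℝ) ^ (i - 1 - j) * (j.factorial : ℝ) / ((i - 1).factorial : ℝ))
        = 0 := by
      rw [hsign, hifac]
      field_simp
      ring
    rw [this, zero_smul]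

lemma B_zero : B 0 0 = 1 := by
  simp [B, Polynomial.bernoulli_zero]

lemma row_zero {k : ℕ} (N : ℕ) (Q : Matrix (Fin k) (Fin k) ℝ) (hN : 1 ≤ N)
    (j : ℕ) (hj : j ≤ N) :
    spN N Q N 0 j + ∑ r ∈ Finset.range (N + 1),
        (if r < N then (-(B (r + 1) 0) / ((r : ℝ) + 1)) else 0) • (Q * spN N Q N r j)
      = if j = 0 then T1mat N k Q else if j < N then Tjmat N k Q (j + 1) else 0 := by
  rw [Finset.sum_range_succ, if_neg (lt_irrefl N), zero_smul, add_zero]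
  by_cases hj0 : j = 0
  · subst hj0
    rw [if_pos rfl]
    have hsp0 : spN N Q N 0 0 = 1 := by rw [spN, if_pos rfl]
    rw [hsp0, T1mat, Finset.sum_range_succ']
    have hterm : ∀ r ∈ Finset.range N,
        (if r < N then (-(B (r + 1) 0) / ((r : ℝ) + 1)) else 0) • (Q * spN N Q N r 0)
          = ((-1 : ℝ) ^ (r + 1) * B (r + 1) 0 / ((r + 1).factorial : ℝ)) • Q ^ (r + 1) := by
      intro r hr
      rw [Finset.mem_range] at hr
      rw [if_pos hr, spN_of_le N Q (Nat.zero_le r), Matrix.mul_smul, smul_smul, ← pow_succ']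
      congr 1
      rw [Nat.sub_zero] at *
      have hfac : (((r + 1).factorial : ℝ)) = ((r : ℝ) + 1) * (r.factorial : ℝ) := by
        rw [Nat.factorial_succ]; push_cast; ring
      have h1 : ((r : ℝ) + 1) ≠ 0 := by positivity
      have h2 : ((r.factorial : ℝ)) ≠ 0 := Nat.cast_ne_zero.mpr r.factorial_ne_zero
      rw [hfac, Nat.factorial_zero, pow_succ]
      push_cast
      field_simp
    rw [Finset.sum_congr rfl hterm]
    have h0 : ((-1 : ℝ) ^ 0 * B 0 0 / ((Nat.factorial 0 : ℕ) : ℝ)) • Q ^ 0 = 1 := by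
      rw [B_zero, Nat.factorial_zero, pow_zero, pow_zero]
      norm_num
    rw [h0, add_comm]
  · rw [if_neg hj0]
    have hsp0 : spN N Q N 0 j = 0 := spN_of_lt N Q (by omega)
    rw [hsp0, zero_add]
    by_cases hjN : j < N
    · rw [if_pos hjN]
      have hsub : Finset.Icc j (N - 1) ⊆ Finset.range N := by
        intro r hr
        rw [Finset.mem_Icc] at hr
        rw [Finset.mem_range]
        omega
      rw [← Finset.sum_subset hsub (by
        intro r hr hr2
        rw [Finset.mem_range] at hr
        rw [Finset.mem_Icc] at hr2
        have : r < j := by omega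
        rw [spN_of_lt N Q this, Matrix.mul_zero, smul_zero])]
      have himg : Finset.Icc (j + 1) N = Finset.image (· + 1) (Finset.Icc j (N - 1)) := by
        rw [Finset.image_add_right_Icc]
        congr 1
        omega
      rw [Tjmat, himg, Finset.sum_image (fun a _ b _ h => by omega)]
      refine Finset.sum_congr rfl fun r hr => ?_
      rw [Finset.mem_Icc] at hr
      rw [if_pos (by omega : r < N), spN_of_le N Q (by omega : j ≤ r),
        Matrix.mul_smul, smul_smul, ← pow_succ']
      have he1 : r + 1 - (j + 1) + 1 = r - j + 1 := by omega
      have he2 : (j + 1 - 1) = j := by omega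
      rw [he1, he2]
      congr 1
      have hfac : (((r + 1).factorial : ℝ)) = ((r : ℝ) + 1) * (r.factorial : ℝ) := by
        rw [Nat.factorial_succ]; push_cast; ring
      have h1 : ((r : ℝ) + 1) ≠ 0 := by positivity
      have h2 : ((r.factorial : ℝ)) ≠ 0 := Nat.cast_ne_zero.mpr r.factorial_ne_zero
      have h3 : ((j.factorial : ℝ)) ≠ 0 := Nat.cast_ne_zero.mpr j.factorial_ne_zero
      rw [hfac, pow_succ]
      field_simp
    · rw [if_neg hjN]
      refine Finset.sum_eq_zero fun r hr => ?_
      rw [Finset.mem_range] at hr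
      rw [if_pos hr, spN_of_lt N Q (by omega : r < j), Matrix.mul_zero, smul_zero]

lemma blockOf_add {n k : ℕ} (f g : Fin n → Fin n → Matrix (Fin k) (Fin k) ℝ) :
    blockOf f + blockOf g = blockOf fun i j => f i j + g i j := by
  ext ⟨i, a⟩ ⟨j, b⟩
  simp [blockOf]

theorem H_mul_Sprod_eq_T (N k : ℕ) (hN : 1 ≤ N) (hk : 1 ≤ k)
    (Q : Matrix (Fin k) (Fin k) ℝ) :
    ((1 : Matrix (Fin (N + 1) × Fin k) (Fin (N + 1) × Fin k) ℝ) + Pmat N ⊗ₖ Q) *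
        Sprod N k Q N = Tmat N k Q := by
  rw [one_eq_blockOf, kron_eq_blockOf, blockOf_add, Sprod_eq Q N le_rfl, blockOf_mul, Tmat]
  apply blockOf_ext
  intro i j
  have hsum : ∀ r : Fin (N + 1),
      ((if i = r then (1 : Matrix (Fin k) (Fin k) ℝ) else 0) + Pmat N i r • Q) *
          spN N Q N (r : ℕ) (j : ℕ)
        = (if i = r then spN N Q N (r : ℕ) (j : ℕ) else 0) +
            Pmat N i r • (Q * spN N Q N (r : ℕ) (j : ℕ)) := by
    intro r
    rw [add_mul, Matrix.smul_mul]
    by_cases h : i = r <;> simp [h]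
  rw [Finset.sum_congr rfl fun r _ => hsum r, Finset.sum_add_distrib,
    Finset.sum_ite_eq Finset.univ i, if_pos (Finset.mem_univ i)]
  by_cases hi0 : (i : ℕ) = 0
  · have hP : ∀ r : Fin (N + 1), Pmat N i r =
        if (r : ℕ) < N then (-(B ((r : ℕ) + 1) 0) / ((r : ℕ) + 1)) else 0 := by
      intro r; simp [Pmat, hi0, show i = 0 from Fin.ext hi0]
    simp_rw [hP]
    rw [Fin.sum_univ_eq_sum_range
      (fun n => (if n < N then (-(B (n + 1) 0) / ((n : ℝ) + 1)) else 0) •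
        (Q * spN N Q N n (j : ℕ))) (N + 1)]
    rw [hi0, row_zero N Q hN (j : ℕ) (Fin.is_le j), if_pos rfl]
  · have hi1 : 1 ≤ (i : ℕ) := by omega
    have hP : ∀ r : Fin (N + 1), Pmat N i r =
        if (i : ℕ) = (r : ℕ) + 1 then 1 / (((r : ℕ) : ℝ) + 1) else 0 := by
      intro r; simp [Pmat, hi0, show i ≠ 0 from fun h => hi0 (by simp [h])]
    simp_rw [hP, ite_smul, zero_smul]
    have hi0' : (i : ℕ) - 1 < N + 1 := by omega
    have hcond : ∀ r : Fin (N + 1),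
        ((i : ℕ) = (r : ℕ) + 1) ↔ r = (⟨(i : ℕ) - 1, hi0'⟩ : Fin (N + 1)) := by
      intro r
      constructor
      · intro h; exact Fin.ext (by simp; omega)
      · rintro rfl; simp; omega
    simp_rw [hcond]
    rw [Finset.sum_ite_eq' Finset.univ (⟨(i : ℕ) - 1, hi0'⟩ : Fin (N + 1)),
      if_pos (Finset.mem_univ _), if_neg hi0]
    exact row_pos N Q (i : ℕ) (j : ℕ) hi1
end
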